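/- On finitely supported closed coeffect contexts, define Γ + Δ := (Γ ∪̂ Δ)⋆ and X × Γ := (X ◁̂ Γ)⋆, where ∪̂ is pointwise union and (X ◁̂ Γ) y = X ◁ (Γ y). Then these operations make the finitely supported closed contexts a module over the semiring 𝓛 of sharing coeffects: for all finite link sets X, Y and all finitely supported closed contexts Γ, Δ one has (X ∪ Y) × Γ = (X × Γ) + (Y × Γ), X × (Γ + Δ) = (X × Γ) + (X × Δ), (X ◁ Y) × Γ = X × (Y × Γ), ∅ × Γ = 0, X × 0 = 0, and {res} × Γ = Γ, where 0 is the everywhere-∅ context; moreover × is monotone in both arguments (with respect to ⊆ on Finset L and ⊆̂ on contexts). -/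

import Mathlib

/-!
Closure absorbs closures inside the two pointwise operations: `(Γ⋆ ∪̂ Δ⋆)⋆ = (Γ ∪̂ Δ)⋆` and
`(X ◁̂ Γ⋆)⋆ = (X ◁̂ Γ)⋆`. Hence each module law reduces to the corresponding pointwise identity
for `◁` (distributivity over `∪`, associativity, `{res}` a unit, `∅` absorbing), and monotonicity
of `×` to monotonicity of `◁` and of closure. The second absorption law is the heart of the
matter: for `X ≠ ∅`, `X ◁ Y` substitutes `X` for `res` in `Y`, and the preimage of a closed
context under this substitution is closed, so it contains `Γ⋆` as soon as it contains `Γ`.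
-/

/-- The operation `X ◁ Y` on sharing coeffects: it is `∅` if `X = ∅`, it is `Y`
if `X ≠ ∅` and `res ∉ Y`, and it is `(Y \ {res}) ∪ X` if `X ≠ ∅` and `res ∈ Y`. -/
def tri {L : Type*} [DecidableEq L] (res : L) (X Y : Finset L) : Finset L :=
  if X = ∅ then ∅ else if res ∈ Y then (Y \ {res}) ∪ X else Y

/-- A coeffect context `γ : V → Finset L` is closed if whenever `ℓ` and `ℓ'`
are both links of `x` and `ℓ'` is a link of `y`, then `ℓ` is a link of `y`. -/
def IsClosedCtx {V L : Type*} (γ : V → Finset L) : Prop :=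
  ∀ (x y : V) (ℓ ℓ' : L), ℓ ∈ γ x → ℓ' ∈ γ x → ℓ' ∈ γ y → ℓ ∈ γ y

/-- A coeffect context is finitely supported if only finitely many variables
have a non-empty coeffect. -/
def IsFinSupported {V L : Type*} (γ : V → Finset L) : Prop :=
  {x : V | γ x ≠ ∅}.Finite

/-- `γs` is the closure of `γ`: the pointwise-least closed context containing `γ`. -/
def IsClosure {V L : Type*} (γ γs : V → Finset L) : Prop :=
  IsClosedCtx γs ∧ (∀ x : V, γ x ⊆ γs x) ∧
    ∀ δ : V → Finset L, IsClosedCtx δ → (∀ x : V, γ x ⊆ δ x) → ∀ x : V, γs x ⊆ δ x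

/-- The sum of two contexts: the closure (computed by `star`) of the pointwise union. -/
def ctxAdd {V L : Type*} [DecidableEq L] (star : (V → Finset L) → (V → Finset L))
    (Γ Δ : V → Finset L) : V → Finset L :=
  star (fun x => Γ x ∪ Δ x)

/-- Scalar multiplication of a context by a coeffect: the closure (computed by
`star`) of the pointwise application of `◁`. -/
def ctxSmul {V L : Type*} [DecidableEq L] (res : L)
    (star : (V → Finset L) → (V → Finset L))
    (X : Finset L) (Γ : V → Finset L) : V → Finset L :=
  star (fun y => tri res X (Γ y))

section Tri
variable {L : Type*} [DecidableEq L] (res : L)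

lemma tri_empty_left (Y : Finset L) : tri res ∅ Y = ∅ := if_pos rfl

lemma tri_empty_right (X : Finset L) : tri res X ∅ = ∅ := by
  grind [tri]

lemma tri_singleton_res (Y : Finset L) : tri res {res} Y = Y := by
  grind [tri, Finset.singleton_ne_empty]

lemma tri_mono_left {X Y : Finset L} (h : X ⊆ Y) (Z : Finset L) :
    tri res X Z ⊆ tri res Y Z := by
  grind [tri]

lemma tri_mono_right {Y Z : Finset L} (X : Finset L) (h : Y ⊆ Z) :
    tri res X Y ⊆ tri res X Z := by
  grind [tri]

lemma tri_union_left (X Y Z : Finset L) :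
    tri res (X ∪ Y) Z = tri res X Z ∪ tri res Y Z := by
  grind [tri]

lemma tri_union_right (X A B : Finset L) :
    tri res X (A ∪ B) = tri res X A ∪ tri res X B := by
  grind [tri]

lemma tri_assoc (X Y Z : Finset L) :
    tri res (tri res X Y) Z = tri res X (tri res Y Z) := by
  grind [tri]

end Tri

section Contexts
variable {V L : Type*}

lemma isClosedCtx_empty : IsClosedCtx (fun _ : V => (∅ : Finset L)) := by
  intro x y ℓ ℓ' h
  simp at h

lemma IsClosedCtx.restrict {δ : V → Finset L} (hδ : IsClosedCtx δ) (p : V → Prop)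
    [DecidablePred p] : IsClosedCtx fun x => if p x then δ x else ∅ := by
  intro x y ℓ ℓ' hℓ hℓ' hℓ'y
  by_cases hx : p x <;> by_cases hy : p y <;> simp_all
  exact hδ x y ℓ ℓ' hℓ hℓ' hℓ'y

lemma isFinSupported_empty : IsFinSupported (fun _ : V => (∅ : Finset L)) := by
  simp [IsFinSupported]

lemma IsFinSupported.union [DecidableEq L] {Γ Δ : V → Finset L} (hΓ : IsFinSupported Γ)
    (hΔ : IsFinSupported Δ) : IsFinSupported fun x => Γ x ∪ Δ x :=
  (Set.Finite.union hΓ hΔ).subset fun x hx => by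
    by_contra h
    simp_all [Finset.union_eq_empty]

lemma IsFinSupported.map {L' : Type*} {Γ : V → Finset L} (hΓ : IsFinSupported Γ)
    (f : Finset L → Finset L') (hf : f ∅ = ∅) : IsFinSupported fun x => f (Γ x) :=
  hΓ.subset fun x hx hΓx => hx (by simp only [hΓx, hf])

end Contexts

section Substitution
variable {L : Type*} [DecidableEq L]

def substRes (res : L) (X : Finset L) (a : L) : Finset L := if a = res then X else {a}

lemma substRes_nonempty {res : L} {X : Finset L} (hX : X ≠ ∅) (a : L) :
    (substRes res X a).Nonempty := by
  unfold substRes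
  split_ifs
  · exact Finset.nonempty_iff_ne_empty.2 hX
  · exact Finset.singleton_nonempty a

lemma tri_eq_biUnion_substRes (res : L) {X : Finset L} (hX : X ≠ ∅) (Y : Finset L) :
    tri res X Y = Y.biUnion (substRes res X) := by
  ext a
  simp only [tri, substRes, hX, Finset.mem_biUnion]
  grind

end Substitution

namespace IsClosure
variable {V L : Type*} {γ γs δ δs : V → Finset L}

lemma le_closure (h : IsClosure γ γs) : γ ≤ γs := h.2.1

lemma closure_le (h : IsClosure γ γs) (hδ : IsClosedCtx δ) (hγδ : γ ≤ δ) : γs ≤ δ :=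
  h.2.2 δ hδ hγδ

lemma eq_self_of_isClosedCtx (h : IsClosure γ γs) (hγ : IsClosedCtx γ) : γs = γ :=
  le_antisymm (h.closure_le hγ le_rfl) h.le_closure

lemma mono (hγ : IsClosure γ γs) (hδ : IsClosure δ δs) (hγδ : γ ≤ δ) : γs ≤ δs :=
  hγ.closure_le hδ.1 (hγδ.trans hδ.le_closure)

lemma eq_of_le_of_le (hγ : IsClosure γ γs) (hδ : IsClosure δ δs) (hγδ : γ ≤ δs)
    (hδγ : δ ≤ γs) : γs = δs :=
  le_antisymm (hγ.closure_le hδ.1 hγδ) (hδ.closure_le hγ.1 hδγ)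

lemma eq_empty_of_eq_empty (h : IsClosure γ γs) {x : V} (hx : γ x = ∅) : γs x = ∅ := by
  classical
  have hle := h.closure_le (h.1.restrict fun y => γ y ≠ ∅) (fun y => by
    dsimp only
    split_ifs with hy
    · exact h.le_closure y
    · simp_all) x
  simpa [hx] using hle

lemma isFinSupported (h : IsClosure γ γs) (hγ : IsFinSupported γ) : IsFinSupported γs :=
  hγ.subset fun _ hx hγx => hx (h.eq_empty_of_eq_empty hγx)

lemma tri_closure_le [DecidableEq L] {res : L} {X : Finset L} (hX : X ≠ ∅) {E : V → Finset L}
    (hδ : IsClosure δ δs) (hE : IsClosure (fun y => tri res X (δ y)) E) :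
    (fun y => tri res X (δs y)) ≤ E := by
  -- `ρ` is the preimage of `E` under the substitution; it is closed because `E` is and
  -- every `substRes res X a` is nonempty.
  set ρ : V → Finset L := fun y => (insert res (E y)).filter (substRes res X · ⊆ E y)
  have mem_ρ : ∀ y a, a ∈ ρ y ↔ substRes res X a ⊆ E y := by
    intro y a
    simp only [ρ, Finset.mem_filter, Finset.mem_insert, and_iff_right_iff_imp]
    intro ha
    by_cases hres : a = res
    · exact Or.inl hres
    · simpa [substRes, hres] using ha
  have hρ : IsClosedCtx ρ := by
    intro x y ℓ ℓ' hℓ hℓ' hℓ'y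
    simp only [mem_ρ] at hℓ hℓ' hℓ'y ⊢
    obtain ⟨c, hc⟩ := substRes_nonempty hX ℓ'
    exact fun a ha => hE.1 x y a c (hℓ ha) (hℓ' hc) (hℓ'y hc)
  have hδρ : δ ≤ ρ := by
    intro y a ha
    have hy := hE.le_closure y
    simp only [tri_eq_biUnion_substRes res hX, Finset.biUnion_subset] at hy
    exact (mem_ρ y a).2 (hy a ha)
  intro y
  simp only [tri_eq_biUnion_substRes res hX, Finset.biUnion_subset]
  exact fun a ha => (mem_ρ y a).1 (hδ.closure_le hρ hδρ y ha)

end IsClosure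

def ComputesClosure {V L : Type*} (star : (V → Finset L) → (V → Finset L)) : Prop :=
  ∀ γ : V → Finset L, IsFinSupported γ → IsClosure γ (star γ)

namespace ComputesClosure
variable {V L : Type*} [DecidableEq L] {star : (V → Finset L) → (V → Finset L)}

lemma ctxAdd_star (h : ComputesClosure star) {γ δ : V → Finset L} (hγ : IsFinSupported γ)
    (hδ : IsFinSupported δ) : ctxAdd star (star γ) (star δ) = ctxAdd star γ δ := by
  have hγs := h γ hγ
  have hδs := h δ hδ
  have hsum := h _ (hγ.union hδ)
  have hsum' := h _ ((hγs.isFinSupported hγ).union (hδs.isFinSupported hδ))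
  refine hsum'.eq_of_le_of_le hsum (fun x => Finset.union_subset ?_ ?_) ?_
  · exact hγs.mono hsum (fun _ => Finset.subset_union_left) x
  · exact hδs.mono hsum (fun _ => Finset.subset_union_right) x
  · exact le_trans (fun x => Finset.union_subset_union (hγs.le_closure x) (hδs.le_closure x))
      hsum'.le_closure

lemma ctxSmul_star (h : ComputesClosure star) (res : L) (X : Finset L) {δ : V → Finset L}
    (hδ : IsFinSupported δ) : ctxSmul res star X (star δ) = ctxSmul res star X δ := by
  rcases eq_or_ne X ∅ with rfl | hX
  · simp only [ctxSmul, tri_empty_left]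
  have hδs := h δ hδ
  have htri := h _ (hδ.map _ (tri_empty_right res X))
  have htri' := h _ ((hδs.isFinSupported hδ).map _ (tri_empty_right res X))
  refine htri'.eq_of_le_of_le htri (hδs.tri_closure_le hX htri) (le_trans ?_ htri'.le_closure)
  exact fun y => tri_mono_right res X (hδs.le_closure y)

end ComputesClosure

/-- the finitely supported closed coeffect contexts, with
`Γ + Δ := (Γ ∪̂ Δ)⋆` and `X × Γ := (X ◁̂ Γ)⋆`, form a module over the semiring
`𝓛` of sharing coeffects, with `×` monotone in both arguments. -/
theorem closed_ctxs_module {L V : Type*} [DecidableEq L] (res : L)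
    (star : (V → Finset L) → (V → Finset L))
    (hstar : ∀ γ : V → Finset L, IsFinSupported γ → IsClosure γ (star γ)) :
    -- (X ∪ Y) × Γ = (X × Γ) + (Y × Γ)
    (∀ (X Y : Finset L) (Γ : V → Finset L), IsFinSupported Γ → IsClosedCtx Γ →
        ctxSmul res star (X ∪ Y) Γ =
          ctxAdd star (ctxSmul res star X Γ) (ctxSmul res star Y Γ)) ∧
    -- X × (Γ + Δ) = (X × Γ) + (X × Δ)
    (∀ (X : Finset L) (Γ Δ : V → Finset L), IsFinSupported Γ → IsClosedCtx Γ →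
        IsFinSupported Δ → IsClosedCtx Δ →
        ctxSmul res star X (ctxAdd star Γ Δ) =
          ctxAdd star (ctxSmul res star X Γ) (ctxSmul res star X Δ)) ∧
    -- (X ◁ Y) × Γ = X × (Y × Γ)
    (∀ (X Y : Finset L) (Γ : V → Finset L), IsFinSupported Γ → IsClosedCtx Γ →
        ctxSmul res star (tri res X Y) Γ =
          ctxSmul res star X (ctxSmul res star Y Γ)) ∧
    -- ∅ × Γ = 0
    (∀ Γ : V → Finset L, IsFinSupported Γ → IsClosedCtx Γ →
        ctxSmul res star ∅ Γ = fun _ => ∅) ∧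
    -- X × 0 = 0
    (∀ X : Finset L, ctxSmul res star X (fun _ => ∅) = fun _ => ∅) ∧
    -- {res} × Γ = Γ
    (∀ Γ : V → Finset L, IsFinSupported Γ → IsClosedCtx Γ →
        ctxSmul res star {res} Γ = Γ) ∧
    -- monotonicity in the scalar argument
    (∀ (X Y : Finset L) (Γ : V → Finset L), IsFinSupported Γ → IsClosedCtx Γ →
        X ⊆ Y → ∀ x : V, ctxSmul res star X Γ x ⊆ ctxSmul res star Y Γ x) ∧
    -- monotonicity in the context argument
    (∀ (X : Finset L) (Γ Δ : V → Finset L), IsFinSupported Γ → IsClosedCtx Γ →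
        IsFinSupported Δ → IsClosedCtx Δ → (∀ x : V, Γ x ⊆ Δ x) →
        ∀ x : V, ctxSmul res star X Γ x ⊆ ctxSmul res star X Δ x) := by
  have h : ComputesClosure star := hstar
  have hsmul : ∀ X (Γ : V → Finset L), IsFinSupported Γ →
      IsFinSupported fun y => tri res X (Γ y) :=
    fun X _ hΓ => hΓ.map _ (tri_empty_right res X)
  have hzero : star (fun _ => ∅) = fun _ => ∅ :=
    (h _ isFinSupported_empty).eq_self_of_isClosedCtx isClosedCtx_empty
  refine ⟨?_, ?_, ?_, ?_, ?_, ?_, ?_, ?_⟩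
  · intro X Y Γ hΓ _
    refine Eq.trans ?_ (h.ctxAdd_star (hsmul X Γ hΓ) (hsmul Y Γ hΓ)).symm
    simp only [ctxSmul, ctxAdd, tri_union_left]
  · intro X Γ Δ hΓ _ hΔ _
    calc ctxSmul res star X (ctxAdd star Γ Δ)
        = ctxSmul res star X (fun x => Γ x ∪ Δ x) := h.ctxSmul_star res X (hΓ.union hΔ)
      _ = ctxAdd star (fun y => tri res X (Γ y)) (fun y => tri res X (Δ y)) := by
        simp only [ctxSmul, ctxAdd, tri_union_right]
      _ = _ := (h.ctxAdd_star (hsmul X Γ hΓ) (hsmul X Δ hΔ)).symm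
  · intro X Y Γ hΓ _
    refine Eq.trans ?_ (h.ctxSmul_star res X (hsmul Y Γ hΓ)).symm
    simp only [ctxSmul, tri_assoc]
  · intro Γ _ _
    simp only [ctxSmul, tri_empty_left, hzero]
  · intro X
    simp only [ctxSmul, tri_empty_right, hzero]
  · intro Γ hΓ hΓc
    simpa only [ctxSmul, tri_singleton_res] using (h Γ hΓ).eq_self_of_isClosedCtx hΓc
  · intro X Y Γ hΓ _ hXY
    exact (h _ (hsmul X Γ hΓ)).mono (h _ (hsmul Y Γ hΓ)) fun y => tri_mono_left res hXY (Γ y)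
  · intro X Γ Δ hΓ _ hΔ _ hΓΔ
    exact (h _ (hsmul X Γ hΓ)).mono (h _ (hsmul X Δ hΔ)) fun y => tri_mono_right res X (hΓΔ y)
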